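/- arXiv:2509.09312 — 4 statements merged into one kernel-verified Lean document; each statement's English description precedes it below -/
import Mathlib

section
/- Let G = (C, E) be a complete tournament and let w ∈ TC(G) be a top-cycle winner of G. Then every minimal support X for w ∈ TC(G) is a w-rooted out-tree: for every candidate c ≠ w there exists a unique directed path from w to c in X. -/
/-- `E` is the edge set of a complete (unweighted) tournament on `C`:
asymmetric and total on distinct candidates. -/
def IsCompleteT {C : Type*} (E : Finset (C × C)) : Prop :=
  (∀ x y : C, (x, y) ∈ E → (y, x) ∉ E) ∧
  (∀ x y : C, x ≠ y → (x, y) ∈ E ∨ (y, x) ∈ E)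

/-- Reachability along directed edges of `E`. -/
def Reach {C : Type*} (E : Finset (C × C)) (a b : C) : Prop :=
  Relation.ReflTransGen (fun x y => (x, y) ∈ E) a b

/-- Membership in the top cycle: `c` reaches every other candidate via a directed path. -/
def InTC {C : Type*} (E : Finset (C × C)) (c : C) : Prop :=
  ∀ c' : C, Reach E c c'

/-- `w` is a necessary winner of TC in the partial tournament `X`:
`w` is in the top cycle of every completion of `X`. -/
def NWTC {C : Type*} (X : Finset (C × C)) (w : C) : Prop :=
  ∀ E' : Finset (C × C), X ⊆ E' → IsCompleteT E' → InTC E' w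

/-- `X` is a minimal support for `w ∈ TC(G)`. -/
def MSTC {C : Type*} (G X : Finset (C × C)) (w : C) : Prop :=
  X ⊆ G ∧ NWTC X w ∧ ∀ Y : Finset (C × C), Y ⊂ X → ¬ NWTC Y w

/-- `l` is a directed path from `a` to `b` along edges of `E`
(a list of pairwise distinct vertices, consecutive ones joined by edges). -/
def IsDiPath {C : Type*} (E : Finset (C × C)) (a b : C) (l : List C) : Prop :=
  l.Nodup ∧ l.Chain' (fun x y => (x, y) ∈ E) ∧ l.head? = some a ∧ l.getLast? = some b


/-!
A necessary winner `w` of a partial tournament `X ⊆ G` already reaches every candidate inside `X`: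
otherwise let `A` be the set of candidates reachable from `w` in `X` and complete `X` by orienting
`G` so that every edge between `A` and its complement points into `A`; in that completion `w`
still reaches only `A`. Conversely, if `w` reaches everything in `X` then every completion of `X`
does too, so a minimal support is a minimal edge set from which `w` reaches everything. In such a
set each edge `(a, v)` is the only way into `v`: if `v` were reachable without it, deleting it
would leave everything reachable. So `w` has no in-edge and every other candidate exactly one,
and a directed path from `w` is determined by following in-edges backwards from its end.
-/

open Finset

section Chain

variable {α : Type*} {s : α → α → Prop}

theorem List.IsChain.eq_of_head?_eq (hs : ∀ a b c, s a b → s a c → b = c) {w : α}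
    (hw : ∀ b, ¬ s w b) :
    ∀ {l₁ l₂ : List α}, l₁.IsChain s → l₂.IsChain s → l₁.head? = l₂.head? →
      l₁.getLast? = some w → l₂.getLast? = some w → l₁ = l₂
  | [], _, _, _, _, h, _ => by simp at h
  | _ :: _, [], _, _, _, _, h => by simp at h
  | [a], [b], _, _, hh, _, _ => by simpa using hh
  | [a], b :: c :: _, _, h₂, hh, h₁, _ => by
    simp only [List.head?_cons, Option.some.injEq, List.getLast?_singleton] at hh h₁
    subst h₁ hh
    exact absurd (List.isChain_cons_cons.1 h₂).1 (hw c)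
  | a :: b :: _, [c], h₁, _, hh, _, h₂ => by
    simp only [List.head?_cons, Option.some.injEq, List.getLast?_singleton] at hh h₂
    subst h₂ hh
    exact absurd (List.isChain_cons_cons.1 h₁).1 (hw b)
  | a :: b :: l₁, c :: d :: l₂, h₁, h₂, hh, e₁, e₂ => by
    rw [List.isChain_cons_cons] at h₁ h₂
    simp only [List.head?_cons, Option.some.injEq] at hh
    subst hh
    rw [List.getLast?_cons_cons] at e₁ e₂
    obtain rfl : b = d := hs _ _ _ h₁.1 h₂.1
    rw [eq_of_head?_eq hs hw h₁.2 h₂.2 rfl e₁ e₂]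

theorem List.IsChain.nodup_of_getLast?_eq (hs : ∀ a b c, s a b → s a c → b = c) {w : α}
    (hw : ∀ b, ¬ s w b) : ∀ {l : List α}, l.IsChain s → l.getLast? = some w → l.Nodup
  | [], _, _ => List.nodup_nil
  | a :: t, h, hl => by
    refine List.nodup_cons.2 ⟨fun ha => ?_, ?_⟩
    · -- a repeated `a` gives two chains of different lengths from `a` to `w`
      obtain ⟨t₁, t₂, rfl⟩ := List.append_of_mem ha
      have hsuffix : (a :: t₂).IsChain s := h.suffix ⟨a :: t₁, by simp⟩
      have hlast : (a :: t₂).getLast? = some w := by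
        rwa [← List.cons_append, List.getLast?_append_cons] at hl
      have := congrArg List.length (eq_of_head?_eq hs hw h hsuffix rfl hl hlast)
      simp only [List.length_cons, List.length_append] at this
      omega
    · cases t with
      | nil => exact List.nodup_nil
      | cons b l => exact nodup_of_getLast?_eq hs hw h.tail (by rwa [List.getLast?_cons_cons] at hl)

end Chain

section Tournament

variable {C : Type*}

lemma Reach.mono {E F : Finset (C × C)} (h : E ⊆ F) {a b : C} (hab : Reach E a b) : Reach F a b :=
  Relation.ReflTransGen.mono (fun _ _ hxy => h hxy) _ _ hab

lemma Reach.mem_of_closed {E : Finset (C × C)} {S : Set C}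
    (hS : ∀ x y, x ∈ S → (x, y) ∈ E → y ∈ S) {a b : C} (ha : a ∈ S) (hab : Reach E a b) :
    b ∈ S := by
  induction hab with
  | refl => exact ha
  | tail _ hyz ih => exact hS _ _ ih hyz

lemma Reach.exists_last_edge [DecidableEq C] {E : Finset (C × C)} {u v : C} (h : Reach E u v)
    (hne : u ≠ v) : ∃ x, Reach (E.filter (·.2 ≠ v)) u x ∧ (x, v) ∈ E := by
  induction h using Relation.ReflTransGen.head_induction_on with
  | refl => exact absurd rfl hne
  | @head u x hux _ ih =>
    by_cases hxv : x = v
    · exact ⟨u, .refl, hxv ▸ hux⟩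
    · obtain ⟨y, hxy, hyv⟩ := ih hxv
      exact ⟨y, .head (mem_filter.2 ⟨hux, hxv⟩) hxy, hyv⟩

lemma NWTC.of_inTC {X : Finset (C × C)} {w : C} (h : InTC X w) : NWTC X w :=
  fun _ hXE _ c => (h c).mono hXE

lemma InTC.erase [DecidableEq C] {E : Finset (C × C)} {w a v : C} (hE : InTC E w)
    (hv : Reach (E.erase (a, v)) w v) : InTC (E.erase (a, v)) w := by
  refine fun c => Reach.mem_of_closed (S := {c | Reach (E.erase (a, v)) w c}) ?_ .refl (hE c)
  intro x y hx hxy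
  by_cases h : (x, y) = (a, v)
  · obtain ⟨-, rfl⟩ := Prod.mk.inj h
    exact hv
  · exact hx.tail (mem_erase.2 ⟨h, hxy⟩)

section OrientInto

variable [Fintype C] [DecidableEq C]

def orientInto (G : Finset (C × C)) (A : Set C) [DecidablePred (· ∈ A)] : Finset (C × C) :=
  univ.filter fun p => ((p.1 ∈ A ↔ p.2 ∈ A) ∧ p ∈ G) ∨ (p.1 ∉ A ∧ p.2 ∈ A)

variable {G : Finset (C × C)} {A : Set C} [DecidablePred (· ∈ A)]

lemma mem_orientInto {u v : C} :
    (u, v) ∈ orientInto G A ↔ ((u ∈ A ↔ v ∈ A) ∧ (u, v) ∈ G) ∨ (u ∉ A ∧ v ∈ A) := by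
  simp [orientInto]

lemma IsCompleteT.orientInto (hG : IsCompleteT G) : IsCompleteT (orientInto G A) := by
  refine ⟨fun u v huv hvu => ?_, fun u v hne => ?_⟩
  · have := hG.1 u v
    rw [mem_orientInto] at huv hvu
    tauto
  · have := hG.2 u v hne
    simp only [mem_orientInto]
    tauto

lemma subset_orientInto {X : Finset (C × C)} (hXG : X ⊆ G)
    (hA : ∀ x y, x ∈ A → (x, y) ∈ X → y ∈ A) : X ⊆ orientInto G A := by
  rintro ⟨u, v⟩ huv
  have := hA u v
  have := hXG huv
  rw [mem_orientInto]
  tauto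

lemma mem_of_reach_orientInto {w c : C} (hw : w ∈ A) (h : Reach (orientInto G A) w c) : c ∈ A :=
  Reach.mem_of_closed (fun x y hx hxy => by rw [mem_orientInto] at hxy; tauto) hw h

lemma IsCompleteT.inTC_of_nwtc (hG : IsCompleteT G) {X : Finset (C × C)} (hXG : X ⊆ G) {w : C}
    (hX : NWTC X w) : InTC X w := by
  classical
  let A : Set C := {c | Reach X w c}
  have hA : ∀ x y, x ∈ A → (x, y) ∈ X → y ∈ A := fun _ _ hx hxy => hx.tail hxy
  exact fun c => mem_of_reach_orientInto (A := A) .refl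
    (hX _ (subset_orientInto hXG hA) hG.orientInto c)

end OrientInto

structure IsOutTree (T : Finset (C × C)) (w : C) : Prop where
  inTC : InTC T w
  not_mem_root : ∀ a, (a, w) ∉ T
  eq_of_mem : ∀ {a b v}, (a, v) ∈ T → (b, v) ∈ T → a = b

section Minimal

variable [DecidableEq C] {X : Finset (C × C)} {w : C}

lemma not_reach_erase_of_minimal (hX : InTC X w) (hmin : ∀ Y ⊂ X, ¬ InTC Y w) {a v : C}
    (hav : (a, v) ∈ X) : ¬ Reach (X.erase (a, v)) w v :=
  fun h => hmin _ (erase_ssubset hav) (hX.erase h)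

lemma isOutTree_of_minimal (hX : InTC X w) (hmin : ∀ Y ⊂ X, ¬ InTC Y w) : IsOutTree X w where
  inTC := hX
  not_mem_root _ ha := not_reach_erase_of_minimal hX hmin ha .refl
  eq_of_mem {a b v} ha hb := by
    by_contra hab
    have hwv : w ≠ v := by
      rintro rfl
      exact not_reach_erase_of_minimal hX hmin ha .refl
    obtain ⟨x, hx, hxv⟩ := (hX v).exists_last_edge hwv
    have hreach : ∀ c, c ≠ x → Reach (X.erase (c, v)) w v := by
      intro c hcx
      have hsub : X.filter (·.2 ≠ v) ⊆ X.erase (c, v) := fun p hp =>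
        mem_erase.2 ⟨fun h => (mem_filter.1 hp).2 (by rw [h]), (mem_filter.1 hp).1⟩
      exact .tail (hx.mono hsub) (mem_erase.2 ⟨by simp [Ne.symm hcx], hxv⟩)
    rcases eq_or_ne a x with rfl | hax
    · exact not_reach_erase_of_minimal hX hmin hb (hreach b (Ne.symm hab))
    · exact not_reach_erase_of_minimal hX hmin ha (hreach a hax)

end Minimal

namespace IsOutTree

variable {T : Finset (C × C)} {w : C}

theorem existsUnique_isDiPath (hT : IsOutTree T w) (c : C) : ∃! l, IsDiPath T w c l := by
  -- read backwards, a path from `w` is a chain of the functional relation "is the parent of"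
  have hs : ∀ a b c, (b, a) ∈ T → (c, a) ∈ T → b = c := fun _ _ _ => hT.eq_of_mem
  have hw : ∀ b, (b, w) ∉ T := hT.not_mem_root
  have hrev : ∀ {l : List C}, l.IsChain (fun x y => (x, y) ∈ T) →
      l.reverse.IsChain (fun x y => (y, x) ∈ T) := List.isChain_reverse.2
  obtain ⟨l, hl, hlast⟩ := List.exists_isChain_cons_of_relationReflTransGen (hT.inTC c)
  have hlast' : (w :: l).getLast? = some c := by rw [← hlast, List.getLast?_eq_some_getLast]
  refine ⟨w :: l, ⟨?_, hl, rfl, hlast'⟩, fun l' ⟨_, hl', hhead', hlast''⟩ => ?_⟩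
  · exact List.nodup_reverse.1 ((hrev hl).nodup_of_getLast?_eq hs hw (by simp))
  · refine List.reverse_injective ((hrev hl').eq_of_head?_eq hs hw (hrev hl) ?_ ?_ ?_)
    · rw [List.head?_reverse, List.head?_reverse, hlast'', hlast']
    · rw [List.getLast?_reverse, hhead']
    · rw [List.getLast?_reverse, List.head?_cons]

end IsOutTree

end Tournament

theorem stmt0_general {C : Type*} [Fintype C] [DecidableEq C]
    (G : Finset (C × C)) (hG : IsCompleteT G) (w : C)
    (X : Finset (C × C)) (hX : MSTC G X w) :
    ∀ c : C, c ≠ w → ∃! l : List C, IsDiPath X w c l := by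
  obtain ⟨hXG, hNW, hmin⟩ := hX
  have hX : InTC X w := hG.inTC_of_nwtc hXG hNW
  have hT : IsOutTree X w := isOutTree_of_minimal hX fun Y hY h => hmin Y hY (.of_inTC h)
  exact fun c _ => hT.existsUnique_isDiPath c

/-- Every minimal support for a top-cycle winner `w` is a `w`-rooted out-tree:
for every candidate `c ≠ w` there is a unique directed path from `w` to `c`. -/
theorem stmt0 {C : Type*} [Fintype C] [DecidableEq C] [Nonempty C]
    (G : Finset (C × C)) (hG : IsCompleteT G) (w : C) (hw : InTC G w)
    (X : Finset (C × C)) (hX : MSTC G X w) :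
    ∀ c : C, c ≠ w → ∃! l : List C, IsDiPath X w c l :=
  stmt0_general G hG w X hX
end

section
/- Let G = (C, μ) be a complete n-weighted tournament and let w ∈ MM(G) be a maximin winner of G. Then for every minimal support X = (C, μ_X) for w ∈ MM(G), there exists t ≤ ⌈n/2⌉ such that for every candidate c ∈ C \ {w}, μ_X(w, c) ≥ t and there exists a candidate c' ∈ C with μ_X(c', c) ≥ n − t. -/
/-!
Take `t` to be the maximin score of `w` in `X`. If `t > ⌈n/2⌉`, lowering one entry `μ_X(w, c)` by
one keeps every entry `μ_X(w, ·)` at least `⌈n/2⌉`, which alone makes `w` win every completion;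
so `X` was not minimal. If some `c ≠ w` had `μ_X(c', c) < n - t` for all `c'`, complete `X` by
giving `c` every open vote it is involved in and `w` none: then `c` scores more than `t`, while
`w` still scores `t`.
-/

/-- `μ` is a partial `n`-weighted tournament on `C`. -/
def IsPartialW {C : Type*} (n : ℕ) (μ : C → C → ℕ) : Prop :=
  (∀ x, μ x x = 0) ∧ ∀ x y : C, x ≠ y → μ x y + μ y x ≤ n

/-- `μ` is a complete `n`-weighted tournament on `C`. -/
def IsCompleteW {C : Type*} (n : ℕ) (μ : C → C → ℕ) : Prop :=
  (∀ x, μ x x = 0) ∧ ∀ x y : C, x ≠ y → μ x y + μ y x = n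

/-- `μ'` extends `μ` (pointwise larger weights), i.e. `μ ⊆ μ'`. -/
def ExtW {C : Type*} (μ μ' : C → C → ℕ) : Prop :=
  ∀ x y : C, μ x y ≤ μ' x y

/-- The size of a partial weighted tournament: total weight of all its edges. -/
def sizeW {C : Type*} [Fintype C] (μ : C → C → ℕ) : ℕ :=
  ∑ x : C, ∑ y : C, μ x y

/-- The maximin score of `c` in `μ`: its worst performance `min_{c' ≠ c} μ(c,c')`. -/
noncomputable def mmScore {C : Type*} (μ : C → C → ℕ) (c : C) : ℕ :=
  sInf {k : ℕ | ∃ c' : C, c' ≠ c ∧ μ c c' = k}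

/-- `c` is a maximin winner: its maximin score is maximal. -/
def InMM {C : Type*} (μ : C → C → ℕ) (c : C) : Prop :=
  ∀ c' : C, mmScore μ c' ≤ mmScore μ c

/-- `w` is a necessary winner of maximin in the partial `n`-weighted tournament `μX`. -/
def NWMM {C : Type*} (n : ℕ) (μX : C → C → ℕ) (w : C) : Prop :=
  ∀ μ' : C → C → ℕ, ExtW μX μ' → IsCompleteW n μ' → InMM μ' w

/-- `μX` is a minimal support for `w ∈ MM(μ)`. -/
def MSMM {C : Type*} (n : ℕ) (μ μX : C → C → ℕ) (w : C) : Prop :=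
  ExtW μX μ ∧ NWMM n μX w ∧
    ∀ μY : C → C → ℕ, ExtW μY μX → μY ≠ μX → ¬ NWMM n μY w

/-- `μX` is a smallest minimal support for `w ∈ MM(μ)`. -/
def SMSMM {C : Type*} [Fintype C] (n : ℕ) (μ μX : C → C → ℕ) (w : C) : Prop :=
  MSMM n μ μX w ∧ ∀ μY : C → C → ℕ, MSMM n μ μY w → sizeW μX ≤ sizeW μY

section

variable {C : Type*} {n : ℕ}

theorem IsCompleteW.isPartialW {μ : C → C → ℕ} (h : IsCompleteW n μ) : IsPartialW n μ :=
  ⟨h.1, fun x y hxy => (h.2 x y hxy).le⟩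

theorem IsPartialW.of_extW {μ μX : C → C → ℕ} (h : IsPartialW n μ) (hX : ExtW μX μ) :
    IsPartialW n μX :=
  ⟨fun x => Nat.le_zero.mp (h.1 x ▸ hX x x),
    fun x y hxy => (add_le_add (hX x y) (hX y x)).trans (h.2 x y hxy)⟩

theorem mmScore_le_apply (μ : C → C → ℕ) {c c' : C} (h : c' ≠ c) : mmScore μ c ≤ μ c c' :=
  Nat.sInf_le ⟨c', h, rfl⟩

theorem le_mmScore {μ : C → C → ℕ} {c : C} {a : ℕ} (hc : ∃ c', c' ≠ c)
    (h : ∀ c', c' ≠ c → a ≤ μ c c') : a ≤ mmScore μ c := by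
  obtain ⟨c₁, hc₁⟩ := hc
  refine le_csInf ⟨μ c c₁, c₁, hc₁, rfl⟩ ?_
  rintro _ ⟨c', hc', rfl⟩
  exact h c' hc'

theorem exists_apply_eq_mmScore (μ : C → C → ℕ) {c c₁ : C} (hc₁ : c₁ ≠ c) :
    ∃ c', c' ≠ c ∧ μ c c' = mmScore μ c :=
  Nat.sInf_mem (s := {k | ∃ c', c' ≠ c ∧ μ c c' = k}) ⟨μ c c₁, c₁, hc₁, rfl⟩

theorem exists_ne_of_mmScore_pos {μ : C → C → ℕ} {c : C} (h : 0 < mmScore μ c) :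
    ∃ c', c' ≠ c := by
  obtain ⟨_, c', hc', -⟩ := Nat.nonempty_of_pos_sInf (s := {k | ∃ c', c' ≠ c ∧ μ c c' = k}) h
  exact ⟨c', hc'⟩

/-- Every other candidate `c'` then scores at most `μ'(c', w) = n - μ'(w, c') ≤ n - ⌈n/2⌉`. -/
theorem IsCompleteW.inMM_of_forall_half_le {μ' : C → C → ℕ} {w : C} (h : IsCompleteW n μ')
    (hw : ∀ c, c ≠ w → (n + 1) / 2 ≤ μ' w c) : InMM μ' w := by
  intro c
  by_cases hc : c = w
  · rw [hc]
  have hc_le : mmScore μ' c ≤ μ' c w := mmScore_le_apply μ' (Ne.symm hc)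
  have hw_ge : (n + 1) / 2 ≤ mmScore μ' w := le_mmScore ⟨c, hc⟩ hw
  have := h.2 c w hc
  have := hw c hc
  omega

theorem nwmm_of_forall_half_le {μX : C → C → ℕ} {w : C}
    (hw : ∀ c, c ≠ w → (n + 1) / 2 ≤ μX w c) : NWMM n μX w :=
  fun _ hext hcomp => hcomp.inMM_of_forall_half_le fun c hc => (hw c hc).trans (hext w c)

theorem MSMM.mmScore_le_half {μ μX : C → C → ℕ} {w : C} (hX : MSMM n μ μX w) :
    mmScore μX w ≤ (n + 1) / 2 := by
  classical
  by_contra! hbig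
  obtain ⟨c₁, hc₁⟩ := exists_ne_of_mmScore_pos (μ := μX) (c := w) (by omega)
  have hpos : 0 < μX w c₁ := by have := mmScore_le_apply μX hc₁; omega
  let μY : C → C → ℕ := fun x y => if x = w ∧ y = c₁ then μX w c₁ - 1 else μX x y
  have hYX : ExtW μY μX := by
    intro x y
    by_cases h : x = w ∧ y = c₁
    · obtain ⟨rfl, rfl⟩ := h
      simp [μY]
    · simp [μY, h]
  have hYne : μY ≠ μX := fun h => by
    have := congrFun (congrFun h w) c₁
    simp only [μY, and_self, if_true] at this
    omega
  refine hX.2.2 μY hYX hYne (nwmm_of_forall_half_le fun c hc => ?_)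
  have hYc : μX w c - 1 ≤ μY w c := by
    by_cases h : c = c₁ <;> simp [μY, h]
  have := mmScore_le_apply μX hc
  omega

def IsOrientation (r : C → C → Prop) : Prop :=
  ∀ x y, x ≠ y → (r x y ↔ ¬ r y x)

def completeAlong [DecidableEq C] (n : ℕ) (μ : C → C → ℕ) (r : C → C → Prop) [DecidableRel r] :
    C → C → ℕ :=
  fun x y => if x = y then 0 else if r x y then n - μ y x else μ x y

section CompleteAlong

variable [DecidableEq C] {μ : C → C → ℕ} {r : C → C → Prop} [DecidableRel r]

theorem completeAlong_of_ne_of_rel {x y : C} (hxy : x ≠ y) (h : r x y) :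
    completeAlong n μ r x y = n - μ y x := by
  simp [completeAlong, hxy, h]

theorem completeAlong_of_ne_of_not_rel {x y : C} (hxy : x ≠ y) (h : ¬ r x y) :
    completeAlong n μ r x y = μ x y := by
  simp [completeAlong, hxy, h]

theorem IsPartialW.extW_completeAlong (hμ : IsPartialW n μ) : ExtW μ (completeAlong n μ r) := by
  intro x y
  by_cases hxy : x = y
  · simp [hxy, hμ.1 y]
  by_cases h : r x y
  · have := hμ.2 x y hxy
    rw [completeAlong_of_ne_of_rel hxy h]
    omega
  · rw [completeAlong_of_ne_of_not_rel hxy h]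

theorem IsPartialW.isCompleteW_completeAlong (hμ : IsPartialW n μ)
    (hr : IsOrientation r) : IsCompleteW n (completeAlong n μ r) := by
  refine ⟨fun x => by simp [completeAlong], fun x y hxy => ?_⟩
  have := hμ.2 x y hxy
  by_cases h : r x y
  · rw [completeAlong_of_ne_of_rel hxy h,
      completeAlong_of_ne_of_not_rel (Ne.symm hxy) ((hr x y hxy).mp h)]
    omega
  · rw [completeAlong_of_ne_of_not_rel hxy h,
      completeAlong_of_ne_of_rel (Ne.symm hxy) (by rwa [hr x y hxy, not_not] at h)]
    omega

end CompleteAlong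

theorem exists_isOrientation_top_bottom {c w : C} (hcw : c ≠ w) :
    ∃ r : C → C → Prop, IsOrientation r ∧
      (∀ x, x ≠ c → r c x) ∧ ∀ x, x ≠ w → ¬ r w x := by
  refine ⟨fun x y => x = c ∨ (y ≠ c ∧ (y = w ∨ (x ≠ w ∧ WellOrderingRel x y))), ?_, ?_, ?_⟩
  · intro x y hxy
    have htri := trichotomous_of WellOrderingRel x y
    have hasymm : WellOrderingRel x y → ¬ WellOrderingRel y x := asymm_of _
    by_cases hxc : x = c <;> by_cases hyc : y = c <;> by_cases hxw : x = w <;>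
      by_cases hyw : y = w <;> simp_all
    exact ⟨hasymm, htri.resolve_right⟩
  · exact fun _ _ => Or.inl rfl
  · rintro x hxw (rfl | ⟨-, rfl | ⟨h, -⟩⟩)
    exacts [hcw rfl, hxw rfl, h rfl]

theorem NWMM.exists_le_apply_of_ne {μX : C → C → ℕ} {w c : C} (hNW : NWMM n μX w)
    (hX : IsPartialW n μX) (hc : c ≠ w) : ∃ c', n - mmScore μX w ≤ μX c' c := by
  classical
  by_contra! hlose
  obtain ⟨r, hr, hr_c, hr_w⟩ := exists_isOrientation_top_bottom hc
  have hwin := hNW _ hX.extW_completeAlong (hX.isCompleteW_completeAlong hr) c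
  obtain ⟨c₀, hc₀, hwc₀⟩ := exists_apply_eq_mmScore μX hc
  have hw_le : mmScore (completeAlong n μX r) w ≤ mmScore μX w := by
    have := mmScore_le_apply (completeAlong n μX r) hc₀
    rwa [completeAlong_of_ne_of_not_rel (Ne.symm hc₀) (hr_w c₀ hc₀), hwc₀] at this
  have hc_gt : mmScore μX w + 1 ≤ mmScore (completeAlong n μX r) c := by
    refine le_mmScore ⟨w, Ne.symm hc⟩ fun x hx => ?_
    rw [completeAlong_of_ne_of_rel (Ne.symm hx) (hr_c x hx)]
    have := hlose x
    omega
  omega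

end

theorem stmt7_general {C : Type*}
    (n : ℕ) (μ : C → C → ℕ) (hG : IsCompleteW n μ)
    (w : C) (μX : C → C → ℕ) (hX : MSMM n μ μX w) :
    ∃ t : ℕ, t ≤ (n + 1) / 2 ∧
      ∀ c : C, c ≠ w → t ≤ μX w c ∧ ∃ c' : C, n - t ≤ μX c' c := by
  have hpart : IsPartialW n μX := hG.isPartialW.of_extW hX.1
  exact ⟨mmScore μX w, hX.mmScore_le_half, fun c hc =>
    ⟨mmScore_le_apply μX hc, hX.2.1.exists_le_apply_of_ne hpart hc⟩⟩

/-- For every minimal support `μX` for a maximin winner `w`, there is `t ≤ ⌈n/2⌉`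
such that every `c ≠ w` satisfies `μX(w,c) ≥ t` and loses at least `n - t`
pairwise comparisons to some candidate `c'`. -/
theorem stmt7 {C : Type*} [Fintype C] [DecidableEq C] [Nonempty C]
    (n : ℕ) (hn : 0 < n) (μ : C → C → ℕ) (hG : IsCompleteW n μ)
    (w : C) (hw : InMM μ w) (μX : C → C → ℕ) (hX : MSMM n μ μX w) :
    ∃ t : ℕ, t ≤ (n + 1) / 2 ∧
      ∀ c : C, c ≠ w → t ≤ μX w c ∧ ∃ c' : C, n - t ≤ μX c' c :=
  stmt7_general n μ hG w μX hX
end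

section
/- Let G = (C, μ) be a complete n-weighted tournament and let w ∈ Borda(G) be a Borda winner of G. Then for all smallest minimal supports X and Y for w ∈ Borda(G), the win counts satisfy |WC(X) − WC(Y)| ≤ max(1, n/2). -/
/-- The Borda score of `c` in `μ`: the total number of pairwise comparisons won. -/
def bScore {C : Type*} [Fintype C] (μ : C → C → ℕ) (c : C) : ℕ :=
  ∑ c' : C, μ c c'

/-- `c` is a Borda winner: its Borda score is maximal. -/
def InBorda {C : Type*} [Fintype C] (μ : C → C → ℕ) (c : C) : Prop :=
  ∀ c' : C, bScore μ c' ≤ bScore μ c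

/-- `w` is a necessary winner of Borda in the partial `n`-weighted tournament `μX`. -/
def NWB {C : Type*} [Fintype C] (n : ℕ) (μX : C → C → ℕ) (w : C) : Prop :=
  ∀ μ' : C → C → ℕ, ExtW μX μ' → IsCompleteW n μ' → InBorda μ' w

/-- `μX` is a minimal support for `w ∈ Borda(μ)`. -/
def MSB {C : Type*} [Fintype C] (n : ℕ) (μ μX : C → C → ℕ) (w : C) : Prop :=
  ExtW μX μ ∧ NWB n μX w ∧
    ∀ μY : C → C → ℕ, ExtW μY μX → μY ≠ μX → ¬ NWB n μY w

/-- `μX` is a smallest minimal support for `w ∈ Borda(μ)`. -/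
def SMSB {C : Type*} [Fintype C] (n : ℕ) (μ μX : C → C → ℕ) (w : C) : Prop :=
  MSB n μ μX w ∧ ∀ μY : C → C → ℕ, MSB n μ μY w → sizeW μX ≤ sizeW μY

/-- `min_{c ≠ w} μ(w, c)`: the worst performance of `w` in a head-to-head. -/
noncomputable def minOpp {C : Type*} (μ : C → C → ℕ) (w : C) : ℕ :=
  sInf {k : ℕ | ∃ c : C, c ≠ w ∧ μ w c = k}

/-- The win count of `μX` with respect to `w`. -/
def winCount {C : Type*} [Fintype C] (μX : C → C → ℕ) (w : C) : ℕ :=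
  ∑ c : C, μX w c

/-!
Write `m = |C|` and `colSum X c` for the weight `X` puts on comparisons won against `c`. In a
completion of `X ⊆ G` a rival `c` scores at most `(m - 1) n - colSum X c` and `w` at least `WC(X)`,
and one completion attains both bounds, so `w` is a necessary winner in `X` iff
`WC(X) + colSum X c ≥ (m - 1) n` for every rival `c`. As every support contains a minimal one, an
SMS is a support of minimum size among all `X ⊆ G` satisfying these inequalities.

Such a minimum support `Y` admits no exchange that keeps the inequalities and makes it smaller: no
unit outside row `w` can be dropped unless its column is a rival with a tight inequality, and no
two such units can be traded for a unit in row `w` unless they lie in one column other than the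
receiving one. So if `WC(X) ≥ WC(Y) + 2`, then `Y` has room left in row `w`, all weight of `Y`
outside row `w` lies in a single column `c*`, the inequality at `c*` is tight and
`Y(w, c*) = G(w, c*)`. As `X` and `Y` have the same size, the weight of `Y` outside row `w` exceeds
that of `X` by `d = WC(X) - WC(Y)`; comparing the tight inequality at `c*` with
`WC(X) ≤ G(w, c*) + (m - 2) n` and `WC(Y) ≥ (m - 2) n` gives `d ≤ G(w, c*) ≤ n - d`.
-/

open Finset

section BordaSupports

variable {C : Type*} {n : ℕ} {w : C}

theorem IsPartialW.of_le {μ ν : C → C → ℕ} (hG : IsCompleteW n μ) (h : ν ≤ μ) :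
    IsPartialW n ν :=
  ⟨fun x => Nat.eq_zero_of_le_zero (hG.1 x ▸ h x x),
    fun x y hxy => hG.2 x y hxy ▸ add_le_add (h x y) (h y x)⟩

section

variable [DecidableEq C] {μ ν : C → C → ℕ} {p q c : C}

def unitW (p q : C) : C → C → ℕ := fun x y => if x = p ∧ y = q then 1 else 0

theorem unitW_le (h : ν p q ≠ 0) : unitW p q ≤ ν := by
  intro x y
  unfold unitW
  split_ifs with hxy
  · obtain ⟨rfl, rfl⟩ := hxy
    exact Nat.one_le_iff_ne_zero.2 h
  · exact Nat.zero_le _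

theorem add_unitW_le (hle : ν ≤ μ) (hlt : ν p q < μ p q) :
    ν + unitW p q ≤ μ := by
  intro x y
  simp only [Pi.add_apply, unitW]
  split_ifs with hxy
  · obtain ⟨rfl, rfl⟩ := hxy
    exact hlt
  · simpa using hle x y

/-- The completion of `ν ⊆ μ` in which `c` wins every open comparison and `w` loses every one. -/
def worstCompletion (n : ℕ) (μ ν : C → C → ℕ) (w c : C) : C → C → ℕ :=
  fun x y =>
    if x = y then 0
    else if x = c then n - ν y x
    else if y = c then ν x y
    else if x = w then ν x y
    else if y = w then n - ν y x
    else μ x y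

theorem worstCompletion_isCompleteW (hG : IsCompleteW n μ) (hν : ν ≤ μ) :
    IsCompleteW n (worstCompletion n μ ν w c) := by
  refine ⟨fun x => by simp [worstCompletion], fun x y hxy => ?_⟩
  have := (IsPartialW.of_le hG hν).2 x y hxy
  have := hG.2 x y hxy
  unfold worstCompletion
  split_ifs <;> grind

theorem le_worstCompletion (hG : IsCompleteW n μ) (hν : ν ≤ μ) :
    ν ≤ worstCompletion n μ ν w c := by
  have hpart := IsPartialW.of_le hG hν
  intro x y
  rcases eq_or_ne x y with rfl | hxy
  · simp [hpart.1 x]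
  · have := hpart.2 x y hxy
    have := hν x y
    unfold worstCompletion
    split_ifs <;> grind

end

variable [Fintype C]

section Weights

def colSum (ν : C → C → ℕ) (c : C) : ℕ := ∑ x, ν x c

theorem winCount_mono {ν ν' : C → C → ℕ} (h : ν ≤ ν') : winCount ν w ≤ winCount ν' w :=
  sum_le_sum fun c _ => h w c

theorem colSum_mono {ν ν' : C → C → ℕ} (h : ν ≤ ν') (c : C) : colSum ν c ≤ colSum ν' c :=
  sum_le_sum fun x _ => h x c

theorem winCount_add (ν ν' : C → C → ℕ) (w : C) :
    winCount (ν + ν') w = winCount ν w + winCount ν' w := sum_add_distrib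

theorem colSum_add (ν ν' : C → C → ℕ) (c : C) :
    colSum (ν + ν') c = colSum ν c + colSum ν' c := sum_add_distrib

theorem sizeW_add (ν ν' : C → C → ℕ) : sizeW (ν + ν') = sizeW ν + sizeW ν' := by
  simp only [sizeW, Pi.add_apply, sum_add_distrib]

theorem sizeW_strictMono : StrictMono (sizeW : (C → C → ℕ) → ℕ) := fun ζ ν h => by
  obtain ⟨hle, x, hx⟩ := Pi.lt_def.1 h
  exact Fintype.sum_strictMono (Pi.lt_def.2 ⟨fun y => Fintype.sum_mono (hle y),
    x, Fintype.sum_strictMono hx⟩)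

variable [DecidableEq C]

def colSumExcept (w : C) (ν : C → C → ℕ) (c : C) : ℕ := ∑ x ∈ univ.erase w, ν x c

theorem colSum_eq_add_colSumExcept (ν : C → C → ℕ) (w c : C) :
    colSum ν c = ν w c + colSumExcept w ν c :=
  (add_sum_erase _ (fun x => ν x c) (mem_univ w)).symm

theorem sizeW_eq_winCount_add (ν : C → C → ℕ) (w : C) :
    sizeW ν = winCount ν w + ∑ c, colSumExcept w ν c := by
  rw [sizeW, sum_comm, winCount, ← sum_add_distrib]
  exact sum_congr rfl fun c _ => colSum_eq_add_colSumExcept ν w c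

theorem colSumExcept_add (ν ν' : C → C → ℕ) (c : C) :
    colSumExcept w (ν + ν') c = colSumExcept w ν c + colSumExcept w ν' c := sum_add_distrib

theorem exists_ne_apply_ne_zero {ν : C → C → ℕ} {c : C} (h : colSumExcept w ν c ≠ 0) :
    ∃ x, x ≠ w ∧ ν x c ≠ 0 := by
  obtain ⟨x, hx, hxc⟩ := exists_ne_zero_of_sum_ne_zero h
  exact ⟨x, ne_of_mem_erase hx, hxc⟩

theorem winCount_unitW (p q : C) : winCount (unitW p q) w = if w = p then 1 else 0 := by
  by_cases h : w = p <;> simp [winCount, unitW, h]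

theorem colSum_unitW (p q c : C) : colSum (unitW p q) c = if c = q then 1 else 0 := by
  by_cases h : c = q <;> simp [colSum, unitW, h]

theorem colSumExcept_unitW_self {p : C} (hp : p ≠ w) (q : C) :
    colSumExcept w (unitW p q) q = 1 := by
  simp [colSumExcept, unitW, sum_ite_eq', hp]

theorem sizeW_unitW (p q : C) : sizeW (unitW p q) = 1 := by
  simp [sizeW, unitW, ite_and]

theorem exists_unitW_add_unitW_le {ν : C → C → ℕ} {c : C} (h : 2 ≤ colSumExcept w ν c) :
    ∃ x₁ x₂, x₁ ≠ w ∧ x₂ ≠ w ∧ unitW x₁ c + unitW x₂ c ≤ ν := by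
  obtain ⟨x₂, hx₂, hx₂c⟩ := exists_ne_apply_ne_zero (by omega : colSumExcept w ν c ≠ 0)
  set ν' := ν - unitW x₂ c
  have hν : ν' + unitW x₂ c = ν := tsub_add_cancel_of_le (unitW_le hx₂c)
  have hν' : colSumExcept w ν' c ≠ 0 := by
    have := colSumExcept_add (w := w) ν' (unitW x₂ c) c
    rw [hν, colSumExcept_unitW_self hx₂] at this
    omega
  obtain ⟨x₁, hx₁, hx₁c⟩ := exists_ne_apply_ne_zero hν'
  exact ⟨x₁, x₂, hx₁, hx₂, hν ▸ add_le_add_left (unitW_le hx₁c) _⟩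

end Weights

section Characterization

theorem IsCompleteW.bScore_add_colSum {μ : C → C → ℕ} (hG : IsCompleteW n μ) (c : C) :
    bScore μ c + colSum μ c = (Fintype.card C - 1) * n := by
  classical
  rw [bScore, colSum, ← sum_add_distrib, ← add_sum_erase _ _ (mem_univ c), hG.1 c,
    sum_congr rfl fun y hy => hG.2 c y (ne_of_mem_erase hy).symm, sum_const,
    card_erase_of_mem (mem_univ c), card_univ, smul_eq_mul, add_zero, zero_add]

theorem IsCompleteW.winCount_add_le {μ : C → C → ℕ} (hG : IsCompleteW n μ)
    {c : C} (hc : c ≠ w) : winCount μ w + n ≤ μ w c + (Fintype.card C - 1) * n := by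
  have := hG.bScore_add_colSum w
  have : μ c w ≤ colSum μ w :=
    single_le_sum (f := fun x => μ x w) (fun _ _ => Nat.zero_le _) (mem_univ c)
  have := hG.2 w c hc.symm
  unfold bScore at *
  unfold winCount
  omega

/-- `c`'s best and `w`'s worst possible Borda score in a completion of `ν` are
`(card C - 1) * n - colSum ν c` and `winCount ν w`. -/
def NWBCond (n : ℕ) (w : C) (ν : C → C → ℕ) : Prop :=
  ∀ c, c ≠ w → (Fintype.card C - 1) * n ≤ winCount ν w + colSum ν c

theorem NWBCond.nwb {ν : C → C → ℕ} (h : NWBCond n w ν) : NWB n ν w := by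
  intro μ' hν hμ' c
  rcases eq_or_ne c w with rfl | hc
  · exact le_rfl
  · have := hμ'.bScore_add_colSum c
    have := h c hc
    have : winCount ν w ≤ bScore μ' w := winCount_mono hν
    have := colSum_mono hν c
    omega

section
variable [DecidableEq C] {μ ν : C → C → ℕ} {c : C}

theorem bScore_worstCompletion (hG : IsCompleteW n μ) (hν : ν ≤ μ) (hc : c ≠ w) :
    bScore (worstCompletion n μ ν w c) w = winCount ν w := by
  refine sum_congr rfl fun y _ => ?_
  rcases eq_or_ne w y with rfl | hwy
  · simp [worstCompletion, (IsPartialW.of_le hG hν).1 w]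
  · by_cases hyc : y = c <;> simp [worstCompletion, hwy, hc.symm, hyc]

theorem colSum_worstCompletion (hG : IsCompleteW n μ) (hν : ν ≤ μ) :
    colSum (worstCompletion n μ ν w c) c = colSum ν c := by
  refine sum_congr rfl fun x _ => ?_
  rcases eq_or_ne x c with rfl | hxc
  · simp [worstCompletion, (IsPartialW.of_le hG hν).1 x]
  · simp [worstCompletion, hxc]

end

theorem nwb_iff_nwbCond {μ ν : C → C → ℕ} (hG : IsCompleteW n μ) (hν : ν ≤ μ) :
    NWB n ν w ↔ NWBCond n w ν := by
  classical
  refine ⟨fun h c hc => ?_, NWBCond.nwb⟩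
  have hcomp := worstCompletion_isCompleteW (w := w) (c := c) hG hν
  have := h _ (le_worstCompletion hG hν) hcomp c
  have := hcomp.bScore_add_colSum c
  rw [bScore_worstCompletion hG hν hc] at *
  rw [colSum_worstCompletion hG hν] at this
  omega

end Characterization

structure IsMinSupport (n : ℕ) (μ : C → C → ℕ) (w : C) (ν : C → C → ℕ) : Prop where
  le : ν ≤ μ
  cond : NWBCond n w ν
  sizeW_le : ∀ ν', ν' ≤ μ → NWBCond n w ν' → sizeW ν ≤ sizeW ν'

theorem exists_msb_sizeW_le {μ ν : C → C → ℕ} (hν : ν ≤ μ) (hN : NWB n ν w) :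
    ∃ ξ, MSB n μ ξ w ∧ sizeW ξ ≤ sizeW ν := by
  by_cases hmin : ∀ ζ, ExtW ζ ν → ζ ≠ ν → ¬ NWB n ζ w
  · exact ⟨ν, ⟨hν, hN, hmin⟩, le_rfl⟩
  · push Not at hmin
    obtain ⟨ζ, hζν, hne, hζ⟩ := hmin
    have hlt := sizeW_strictMono (lt_of_le_of_ne hζν hne)
    obtain ⟨ξ, hξ, hle⟩ := exists_msb_sizeW_le (le_trans hζν hν) hζ
    exact ⟨ξ, hξ, hle.trans hlt.le⟩
termination_by sizeW ν

theorem SMSB.isMinSupport {μ X : C → C → ℕ} (hG : IsCompleteW n μ) (hX : SMSB n μ X w) :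
    IsMinSupport n μ w X where
  le := hX.1.1
  cond := (nwb_iff_nwbCond hG hX.1.1).1 hX.1.2.1
  sizeW_le ν hν hc := by
    obtain ⟨ξ, hξ, hle⟩ := exists_msb_sizeW_le hν ((nwb_iff_nwbCond hG hν).2 hc)
    exact (hX.2 ξ hξ).trans hle

namespace IsMinSupport

variable {μ Z : C → C → ℕ}

theorem sizeW_le_of_exchange (hZ : IsMinSupport n μ w Z) {R A : C → C → ℕ} (hR : R ≤ Z)
    (hA : Z - R + A ≤ μ) (hc : NWBCond n w (Z - R + A)) : sizeW R ≤ sizeW A := by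
  have hZR : sizeW Z = sizeW (Z - R) + sizeW R := by rw [← sizeW_add, tsub_add_cancel_of_le hR]
  have := hZ.sizeW_le _ hA hc
  rw [sizeW_add] at this
  omega

variable [DecidableEq C]

/-- Otherwise removing one unit of column `c` outside row `w` keeps every inequality. -/
theorem ne_and_winCount_add_colSum_le (hZ : IsMinSupport n μ w Z) {c : C} (h : colSumExcept w Z c ≠ 0) :
    c ≠ w ∧ winCount Z w + colSum Z c ≤ (Fintype.card C - 1) * n := by
  obtain ⟨x, hx, hxc⟩ := exists_ne_apply_ne_zero h
  by_contra hslack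
  rw [not_and_or, not_ne_iff, not_le] at hslack
  have hZ' : Z - unitW x c + unitW x c = Z := tsub_add_cancel_of_le (unitW_le hxc)
  have hwin := winCount_add (Z - unitW x c) (unitW x c) w
  rw [hZ', winCount_unitW, if_neg hx.symm] at hwin
  have hcond : NWBCond n w (Z - unitW x c + 0) := fun c' hc' => by
    have hcol := colSum_add (Z - unitW x c) (unitW x c) c'
    rw [hZ', colSum_unitW] at hcol
    have := hZ.cond c' hc'
    rw [add_zero]
    split_ifs at hcol with hc
    · subst hc
      rcases hslack with rfl | hlt
      · exact absurd rfl hc'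
      · omega
    · omega
  have := hZ.sizeW_le_of_exchange (unitW_le hxc)
    (by rw [add_zero]; exact tsub_le_self.trans hZ.le) hcond
  rw [sizeW_unitW] at this
  simp [sizeW] at this

/-- Trading two units outside row `w` for one unit in row `w` keeps every inequality unless
both units come from a single column other than the receiving one. -/
theorem not_unitW_add_unitW_le (hZ : IsMinSupport n μ w Z) {x₁ x₂ c₁ c₂ c₀ : C}
    (hx₁ : x₁ ≠ w) (hx₂ : x₂ ≠ w) (hc₀ : Z w c₀ < μ w c₀) (hc : c₁ = c₂ → c₀ = c₁) :
    ¬ unitW x₁ c₁ + unitW x₂ c₂ ≤ Z := by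
  intro hR
  set R := unitW x₁ c₁ + unitW x₂ c₂
  have hZ' : Z - R + R = Z := tsub_add_cancel_of_le hR
  have hle : Z - R ≤ Z := tsub_le_self
  have hcond : NWBCond n w (Z - R + unitW w c₀) := fun c hc' => by
    have := hZ.cond c hc'
    have hwin := winCount_add (Z - R) R w
    have hcol := colSum_add (Z - R) R c
    rw [hZ'] at hwin hcol
    simp only [R, winCount_add, colSum_add, winCount_unitW, colSum_unitW, if_neg hx₁.symm,
      if_neg hx₂.symm] at hwin hcol ⊢
    split_ifs at hcol ⊢ <;> grind
  have := hZ.sizeW_le_of_exchange hR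
    (add_unitW_le (hle.trans hZ.le) ((hle w c₀).trans_lt hc₀)) hcond
  simp only [R, sizeW_add, sizeW_unitW] at this
  omega

theorem colSumExcept_eq_zero_of_ne (hZ : IsMinSupport n μ w Z) {c₀ c c' : C}
    (hc₀ : Z w c₀ < μ w c₀) (hne : c ≠ c') (hc : colSumExcept w Z c ≠ 0) :
    colSumExcept w Z c' = 0 := by
  by_contra hc'
  obtain ⟨x, hx, hxc⟩ := exists_ne_apply_ne_zero hc
  obtain ⟨x', hx', hxc'⟩ := exists_ne_apply_ne_zero hc'
  refine hZ.not_unitW_add_unitW_le hx hx' hc₀ (absurd · hne) fun y z => ?_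
  simp only [Pi.add_apply, unitW]
  split_ifs <;> grind

theorem apply_eq_of_two_le_colSumExcept (hZ : IsMinSupport n μ w Z) {c : C}
    (h : 2 ≤ colSumExcept w Z c) : Z w c = μ w c := by
  obtain ⟨x₁, x₂, hx₁, hx₂, hle⟩ := exists_unitW_add_unitW_le h
  by_contra hne
  exact hZ.not_unitW_add_unitW_le hx₁ hx₂ (lt_of_le_of_ne (hZ.le w c) hne) (fun _ => rfl) hle

theorem card_sub_one_mul_le_winCount_add (hG : IsCompleteW n μ) (hZ : IsMinSupport n μ w Z) {c : C}
    (hc : ∀ c', c' ≠ c → colSumExcept w Z c' = 0) :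
    (Fintype.card C - 1) * n ≤ winCount Z w + n := by
  by_cases h : ∃ c', c' ≠ w ∧ c' ≠ c
  · obtain ⟨c', hc'w, hc'c⟩ := h
    have := hZ.cond c' hc'w
    have := colSum_eq_add_colSumExcept Z w c'
    have : Z w c' ≤ μ w c' := hZ.le w c'
    have := hG.2 w c' hc'w.symm
    have := hc c' hc'c
    omega
  · push Not at h
    have : Fintype.card C ≤ 2 :=
      (card_le_card (s := univ) (t := {w, c}) fun c' _ => by
        by_cases hc' : c' = w
        · simp [hc']
        · simp [h c' hc']).trans card_le_two
    have : (Fintype.card C - 1) * n ≤ 1 * n := Nat.mul_le_mul_right _ (by omega)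
    omega

variable {X Y : C → C → ℕ}

theorem two_mul_le_of_winCount_eq_add (hG : IsCompleteW n μ) (hX : IsMinSupport n μ w X)
    (hY : IsMinSupport n μ w Y) {d : ℕ} (hd : winCount X w = winCount Y w + d) (hd2 : 2 ≤ d) :
    2 * d ≤ n := by
  have hXμ := winCount_mono (w := w) hX.le
  obtain ⟨c₀, -, hc₀⟩ := exists_lt_of_sum_lt (show ∑ c, Y w c < ∑ c, μ w c by
    unfold winCount at *; omega)
  have hsize := le_antisymm (hX.sizeW_le Y hY.le hY.cond) (hY.sizeW_le X hX.le hX.cond)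
  rw [sizeW_eq_winCount_add X w, sizeW_eq_winCount_add Y w] at hsize
  obtain ⟨c, -, hc⟩ := exists_ne_zero_of_sum_ne_zero
    (show ∑ c, colSumExcept w Y c ≠ 0 by omega)
  have hzero : ∀ c', c' ≠ c → colSumExcept w Y c' = 0 :=
    fun c' hc' => hY.colSumExcept_eq_zero_of_ne hc₀ hc'.symm hc
  have hsum : ∑ c', colSumExcept w Y c' = colSumExcept w Y c :=
    sum_eq_single c (fun c' _ hc' => hzero c' hc') (absurd (mem_univ c))
  obtain ⟨hcw, htight⟩ := hY.ne_and_winCount_add_colSum_le hc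
  have hsat := hY.apply_eq_of_two_le_colSumExcept (show 2 ≤ colSumExcept w Y c by omega)
  have hupper := hG.winCount_add_le hcw
  have hlower := hY.card_sub_one_mul_le_winCount_add hG hzero
  have hcol := colSum_eq_add_colSumExcept Y w c
  have hcond := hY.cond c hcw
  omega

theorem winCount_sub_le (hG : IsCompleteW n μ) (hX : IsMinSupport n μ w X)
    (hY : IsMinSupport n μ w Y) :
    (winCount X w : ℝ) - winCount Y w ≤ max 1 ((n : ℝ) / 2) := by
  rcases le_or_gt (winCount X w) (winCount Y w + 1) with h | h
  · refine le_max_of_le_left ?_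
    rw [sub_le_iff_le_add']
    exact_mod_cast h
  · have := hX.two_mul_le_of_winCount_eq_add hG hY (d := winCount X w - winCount Y w) (by omega) (by omega)
    refine le_max_of_le_right ?_
    rw [le_div_iff₀ two_pos, ← Nat.cast_sub (by omega)]
    exact_mod_cast (by omega : (winCount X w - winCount Y w) * 2 ≤ n)

end IsMinSupport

end BordaSupports

theorem stmt12_general {C : Type*} [Fintype C]
    (n : ℕ)
    (μ : C → C → ℕ) (hG : IsCompleteW n μ) (w : C)
    (μX μY : C → C → ℕ) (hX : SMSB n μ μX w) (hY : SMSB n μ μY w) :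
    |(winCount μX w : ℝ) - (winCount μY w : ℝ)| ≤ max 1 ((n : ℝ) / 2) := by
  classical
  have hX' := hX.isMinSupport hG
  have hY' := hY.isMinSupport hG
  exact abs_sub_le_iff.2 ⟨hX'.winCount_sub_le hG hY', hY'.winCount_sub_le hG hX'⟩

/-- Any two smallest minimal supports for a Borda winner `w` have win counts
differing by at most `max(1, n/2)`. -/
theorem stmt12 {C : Type*} [Fintype C] [DecidableEq C] [Nonempty C]
    (n : ℕ) (hn : 0 < n)
    (μ : C → C → ℕ) (hG : IsCompleteW n μ) (w : C) (hw : InBorda μ w)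
    (μX μY : C → C → ℕ) (hX : SMSB n μ μX w) (hY : SMSB n μ μY w) :
    |(winCount μX w : ℝ) - (winCount μY w : ℝ)| ≤ max 1 ((n : ℝ) / 2) :=
  stmt12_general n μ hG w μX μY hX hY
end

section
/- Let G = (C, μ) be a complete n-weighted tournament with |C| = m candidates and let w ∈ Borda(G) be a Borda winner of G with Borda score σ_w. Then every minimal support X for w ∈ Borda(G) satisfies |X| ≥ (m − 1)(n(m − 1) − σ_w). -/
/-!
Fix a candidate `c ≠ w`. Complete `X` adversarially: `w` receives on each of its pairs only the
weight `X` forces, while `c` receives on each of its pairs everything `X` does not force against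
it. In that completion `σ(w) = σ_X(w) ≤ σ_w` and `σ(c) = n(m - 1) - ∑_y X(y, c)`, so since `w`
is a necessary winner every column of `X` outside `w` carries weight at least `n(m - 1) - σ_w`.
Summing over the `m - 1` columns gives the bound.
-/

open Finset

section Completion

variable {C : Type*} {n : ℕ} {μ μX : C → C → ℕ}

theorem IsCompleteW.isPartialW_of_extW (hG : IsCompleteW n μ) (hX : ExtW μX μ) :
    IsPartialW n μX :=
  ⟨fun x => Nat.le_zero.mp (hG.1 x ▸ hX x x),
    fun x y hxy => hG.2 x y hxy ▸ add_le_add (hX x y) (hX y x)⟩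

/-- On a pair with `pin x y` the direction `x → y` gets only the weight `μX` forces on it;
pairs related by `pin` in neither direction are filled in from `μ`. -/
def pinnedCompletion [DecidableEq C] (n : ℕ) (μX μ : C → C → ℕ) (pin : C → C → Prop)
    [DecidableRel pin] : C → C → ℕ := fun x y =>
  if x = y then 0
  else if pin x y then μX x y
  else if pin y x then n - μX y x
  else μ x y

variable [DecidableEq C] {pin : C → C → Prop} [DecidableRel pin]

theorem extW_pinnedCompletion (hG : IsCompleteW n μ) (hX : ExtW μX μ) :
    ExtW μX (pinnedCompletion n μX μ pin) := by
  intro x y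
  have hP := hG.isPartialW_of_extW hX
  unfold pinnedCompletion
  split_ifs with hxy
  · subst hxy; exact (hP.1 x).le
  · exact le_rfl
  · have := hP.2 y x (Ne.symm hxy); omega
  · exact hX x y

theorem isCompleteW_pinnedCompletion (hG : IsCompleteW n μ) (hX : ExtW μX μ)
    (hpin : ∀ x y, x ≠ y → pin x y → ¬ pin y x) :
    IsCompleteW n (pinnedCompletion n μX μ pin) := by
  refine ⟨fun x => if_pos rfl, fun x y hxy => ?_⟩
  have hP := hG.isPartialW_of_extW hX
  have := hP.2 x y hxy
  unfold pinnedCompletion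
  rw [if_neg hxy, if_neg (Ne.symm hxy)]
  by_cases hxy' : pin x y
  · rw [if_pos hxy', if_neg (hpin x y hxy hxy'), if_pos hxy']; omega
  by_cases hyx : pin y x
  · rw [if_neg hxy', if_pos hyx, if_pos hyx]; omega
  · rw [if_neg hxy', if_neg hyx, if_neg hyx, if_neg hxy']; exact hG.2 x y hxy

end Completion

theorem bScore_mono {C : Type*} [Fintype C] {μ μX : C → C → ℕ} (hX : ExtW μX μ) (c : C) :
    bScore μX c ≤ bScore μ c :=
  sum_le_sum fun y _ => hX c y

theorem NWB.mul_card_sub_one_le_bScore_add_sum {C : Type*} [Fintype C] {n : ℕ}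
    {μ μX : C → C → ℕ} {w c : C} (hNW : NWB n μX w) (hG : IsCompleteW n μ)
    (hX : ExtW μX μ) (hcw : c ≠ w) :
    n * (Fintype.card C - 1) ≤ bScore μX w + ∑ y, μX y c := by
  classical
  have hP := hG.isPartialW_of_extW hX
  let μ' := pinnedCompletion n μX μ fun x y => x = w ∨ y = c
  have hpin : ∀ x y : C, x ≠ y → x = w ∨ y = c → ¬ (y = w ∨ x = c) := by
    rintro x y hxy (rfl | rfl) (rfl | rfl) <;> simp_all
  have hwins : bScore μ' c ≤ bScore μ' w :=
    hNW μ' (extW_pinnedCompletion hG hX) (isCompleteW_pinnedCompletion hG hX hpin) c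
  have hscore_w : bScore μ' w = bScore μX w := by
    refine sum_congr rfl fun y _ => ?_
    by_cases hyw : w = y
    · simp [μ', pinnedCompletion, hyw, hP.1]
    · simp [μ', pinnedCompletion, hyw]
  have hscore_c : bScore μ' c + ∑ y, μX y c = n * (Fintype.card C - 1) := by
    have hterm : ∀ y, μ' c y + μX y c = if y = c then 0 else n := by
      intro y
      by_cases hyc : y = c
      · simp [μ', pinnedCompletion, hyc, hP.1]
      · have := hP.2 y c hyc
        simp only [μ', pinnedCompletion, if_neg (Ne.symm hyc), hcw, hyc, or_self, or_true,
          if_true, if_false]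
        omega
    rw [bScore, ← sum_add_distrib, sum_congr rfl fun y _ => hterm y, sum_ite,
      sum_const_zero, zero_add, sum_const, filter_ne', card_erase_of_mem (mem_univ c),
      card_univ, smul_eq_mul, mul_comm]
  omega

theorem stmt16_general {C : Type*} [Fintype C]
    (n m : ℕ) (hm : Fintype.card C = m)
    (μ : C → C → ℕ) (hG : IsCompleteW n μ)
    (w : C) (μX : C → C → ℕ) (hX : MSB n μ μX w) :
    (m - 1) * (n * (m - 1) - bScore μ w) ≤ sizeW μX := by
  classical
  obtain ⟨hXG, hNW, -⟩ := hX
  have hcol : ∀ c ∈ univ.erase w, n * (m - 1) - bScore μ w ≤ ∑ y, μX y c := fun c hc => by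
    have := hm ▸ hNW.mul_card_sub_one_le_bScore_add_sum hG hXG (ne_of_mem_erase hc)
    have := bScore_mono hXG w
    omega
  calc (m - 1) * (n * (m - 1) - bScore μ w)
      = ∑ _c ∈ univ.erase w, (n * (m - 1) - bScore μ w) := by
        rw [sum_const, card_erase_of_mem (mem_univ w), card_univ, hm, smul_eq_mul]
    _ ≤ ∑ c ∈ univ.erase w, ∑ y, μX y c := sum_le_sum hcol
    _ ≤ ∑ c, ∑ y, μX y c := sum_le_sum_of_subset (subset_univ _)
    _ = sizeW μX := sum_comm

/-- Lower bound on minimal supports for Borda: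
`|X| ≥ (m-1)(n(m-1) - σ_w)`. -/
theorem stmt16 {C : Type*} [Fintype C] [DecidableEq C] [Nonempty C]
    (n m : ℕ) (hn : 0 < n) (hm : Fintype.card C = m)
    (μ : C → C → ℕ) (hG : IsCompleteW n μ)
    (w : C) (hw : InBorda μ w) (μX : C → C → ℕ) (hX : MSB n μ μX w) :
    (m - 1) * (n * (m - 1) - bScore μ w) ≤ sizeW μX :=
  stmt16_general n m hm μ hG w μX hX
end
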